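/- After-flag characterization of the decider: fix an assignment under which exactly l of B_j,...,B_{N−1} are true, and suppose l + c = k and i < j ≤ N. Then DecExt^j_{c,0} evaluates to the value A, and DecExt^j_{c,1} evaluates to the value C. -/

import Mathlib

/-- The decider nodes `DecExt^j_{c,b}` built from the Boolean values `B_0, …, B_{N-1}`,
with distinguished index `i`, target count `k`, and output values `A` (flag 0) and `C`
(flag 1):
`DecExt^j_{c,b} = DecExt^{j+1}_{c,b} ∨ (B_j ∧ DecExt^{j+1}_{c+1,b})` for `j < N`, `j ≠ i`;
`DecExt^i_{c,0} = DecExt^{i+1}_{c,0} ∨ (B_i ∧ DecExt^{i+1}_{c+1,1})`;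
`DecExt^N_{k,0} = A`, `DecExt^N_{k,1} = C`, `DecExt^N_{c,b} = 0` for `c ≠ k`. -/
def decExt (N i : ℕ) (k : ℤ) (A C : Bool) (B : ℕ → Bool) (j : ℕ) (c : ℤ) (b : Bool) : Bool :=
  if _h : j < N then
    if j = i ∧ b = false then
      decExt N i k A C B (j + 1) c false || (B i && decExt N i k A C B (j + 1) (c + 1) true)
    else
      decExt N i k A C B (j + 1) c b || (B j && decExt N i k A C B (j + 1) (c + 1) b)
  else if c = k then (if b then C else A) else false
termination_by N - j
decreasing_by all_goals omega

/-- The number of true values among `B_j, …, B_{N-1}`. -/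
def cnt (N : ℕ) (B : ℕ → Bool) (j : ℕ) : ℕ :=
  ((Finset.Ico j N).filter fun m => B m = true).card

/-!
Only the nodes at index `i` switch the flag, so a node `DecExt^j_{c,b}` with `i < j` is a
plain counter: it is true iff some `k - c` of the true values among `B_j, …, B_{N-1}` can be
picked, i.e. iff `c ≤ k ≤ c + cnt N B j`, and then it returns the output value of flag `b`.
-/

lemma cnt_eq_zero_of_le {N j : ℕ} (B : ℕ → Bool) (h : N ≤ j) : cnt N B j = 0 := by
  simp [cnt, Finset.Ico_eq_empty_of_le h]

lemma cnt_of_lt {N j : ℕ} (B : ℕ → Bool) (h : j < N) :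
    cnt N B j = (if B j then 1 else 0) + cnt N B (j + 1) := by
  unfold cnt
  rw [← Finset.insert_Ico_add_one_left_eq_Ico h, Finset.filter_insert]
  split_ifs
  · rw [Finset.card_insert_of_notMem (by simp)]
    omega
  · simp

section decExt

variable (N i : ℕ) (k : ℤ) (A C : Bool) (B : ℕ → Bool)

lemma decExt_of_le {j : ℕ} (c : ℤ) (b : Bool) (h : N ≤ j) :
    decExt N i k A C B j c b = (decide (c = k) && if b then C else A) := by
  rw [decExt, dif_neg (by omega)]
  split_ifs <;> simp_all

lemma decExt_of_lt_of_ne {j : ℕ} (c : ℤ) (b : Bool) (h : j < N) (hji : j ≠ i) :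
    decExt N i k A C B j c b =
      (decExt N i k A C B (j + 1) c b || (B j && decExt N i k A C B (j + 1) (c + 1) b)) := by
  rw [decExt, dif_pos h, if_neg (by tauto)]

theorem decExt_of_flag_lt {j : ℕ} (hij : i < j) (c : ℤ) (b : Bool) :
    decExt N i k A C B j c b =
      (decide (c ≤ k ∧ k ≤ c + cnt N B j) && if b then C else A) := by
  induction hn : N - j generalizing j c with
  | zero =>
    rw [decExt_of_le N i k A C B c b (by omega), cnt_eq_zero_of_le B (by omega), Nat.cast_zero,
      add_zero]
    simp only [← le_antisymm_iff]
  | succ n ih =>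
    have hjN : j < N := by omega
    have hcnt := cnt_of_lt B hjN
    rw [decExt_of_lt_of_ne N i k A C B c b hjN (by omega), ih (by omega) c (by omega),
      ih (by omega) (c + 1) (by omega)]
    cases (if b then C else A)
    · simp only [Bool.and_false, Bool.or_false]
    · rw [Bool.and_true, Bool.and_true, Bool.and_true, Bool.eq_iff_iff]
      cases hB : B j <;>
        simp only [hB, Bool.false_eq_true, ↓reduceIte, Bool.true_and, Bool.false_and,
          Bool.or_false, Bool.or_eq_true, decide_eq_true_eq] at hcnt ⊢ <;> omega

end decExt

theorem decider_after_flag_general (N i : ℕ) (k : ℤ) (A C : Bool) (B : ℕ → Bool)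
    (j : ℕ) (hij : i < j) (l c : ℤ)
    (hl : (cnt N B j : ℤ) = l) (hlc : l + c = k) :
    decExt N i k A C B j c false = A ∧ decExt N i k A C B j c true = C := by
  have hcount : c ≤ k ∧ k ≤ c + cnt N B j := by omega
  simp [decExt_of_flag_lt N i k A C B hij, hcount]

/-- After-flag characterization of the decider: if exactly `l` of `B_j, …, B_{N-1}` are
true, `l + c = k` and `i < j ≤ N`, then `DecExt^j_{c,0}` evaluates to `A` and
`DecExt^j_{c,1}` evaluates to `C`. -/
theorem decider_after_flag (N i : ℕ) (hi : i < N) (k : ℤ) (A C : Bool) (B : ℕ → Bool)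
    (j : ℕ) (hij : i < j) (hj : j ≤ N) (l c : ℤ)
    (hl : (cnt N B j : ℤ) = l) (hlc : l + c = k) :
    decExt N i k A C B j c false = A ∧ decExt N i k A C B j c true = C :=
  decider_after_flag_general N i k A C B j hij l c hl hlc
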